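/- For every finite list σ over Act there exists a formula Φ_σ of HML_flt such that for every state M of the RLFTS and all lists ς over ℝ_{>0} and ϱ over ℝ, the interpretation satisfies ⟦Φ_σ⟧(M,ς,ϱ) = PT(M,σ,ς,ϱ). -/
import Mathlib


open scoped BigOperators

/-- A rated labeled fluid transition system (RLFTS) over a type `Act` of actions. -/
structure RLFTS (Act : Type) where
  S : Type
  E : Type
  s0 : S
  src : E → S
  tgt : E → S
  rate : E → ℝ
  label : E → Act
  RP : S → ℝ
  rate_pos : ∀ e, 0 < rate e
  out_finite : ∀ s : S, {e : E | src e = s}.Finite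
  out_nonempty : ∀ s : S, ∃ e : E, src e = s

namespace RLFTS

variable {Act : Type}

/-- Exit rate of a state. -/
noncomputable def RE (N : RLFTS Act) (s : N.S) : ℝ :=
  ∑ᶠ e ∈ {e : N.E | N.src e = s}, N.rate e

/-- Average sojourn time in a state. -/
noncomputable def SJ (N : RLFTS Act) (s : N.S) : ℝ := 1 / N.RE s

/-- Firing probability of an edge. -/
noncomputable def PTe (N : RLFTS Act) (e : N.E) : ℝ := N.rate e / N.RE (N.src e)

/-- `IsPathFrom N M es` : the list of edges `es` is a path starting in the state `M`. -/
def IsPathFrom (N : RLFTS Act) : N.S → List N.E → Prop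
  | _, [] => True
  | M, e :: es => N.src e = M ∧ IsPathFrom N (N.tgt e) es

/-- The list of states visited by a path starting in `M`. -/
def visits (N : RLFTS Act) : N.S → List N.E → List N.S
  | M, [] => [M]
  | M, e :: es => M :: visits N (N.tgt e) es

/-- Execution probability of a path. -/
noncomputable def pathPT (N : RLFTS Act) (es : List N.E) : ℝ := (es.map N.PTe).prod

/-- Cumulative execution probability of the `(σ,ς,ϱ)`-selected paths starting in `M`. -/
noncomputable def PTsel (N : RLFTS Act) (M : N.S) (σ : List Act) (ς ϱ : List ℝ) : ℝ :=
  ∑ᶠ es ∈ {es : List N.E | IsPathFrom N M es ∧ es.map N.label = σ ∧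
      (visits N M es).map N.SJ = ς ∧ (visits N M es).map N.RP = ϱ}, N.pathPT es

end RLFTS

/-- Formulas of the fluid modal logic `HML_flt`: `Φ ::= ⊤ | ⟨a⟩Φ`. -/
inductive HMLflt (Act : Type) : Type
  | top : HMLflt Act
  | dia : Act → HMLflt Act → HMLflt Act

open Classical in
/-- Interpretation `⟦Φ⟧(M,ς,ϱ)` of a formula of `HML_flt` at a state `M` of an RLFTS with
a sojourn-time list `ς` and a fluid-rate list `ϱ`. -/
noncomputable def interpFlt {Act : Type} (N : RLFTS Act) :
    HMLflt Act → N.S → List ℝ → List ℝ → ℝ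
  | .top, M, ς, ϱ => if ς = [N.SJ M] ∧ ϱ = [N.RP M] then 1 else 0
  | .dia a Φ, M, s :: ς, r :: ϱ =>
      if N.SJ M = s ∧ N.RP M = r then
        ∑ᶠ e ∈ {e : N.E | N.src e = M ∧ N.label e = a},
          N.PTe e * interpFlt N Φ (N.tgt e) ς ϱ
      else 0
  | .dia _ _, _, _, _ => 0


section Aux
variable {Act : Type} (N : RLFTS Act)

lemma pathSet_finite : ∀ (n : ℕ) (M : N.S),
    {es : List N.E | N.IsPathFrom M es ∧ es.length = n}.Finite := by
  intro n
  induction n with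
  | zero =>
    intro M
    apply Set.Finite.subset (Set.finite_singleton ([] : List N.E))
    rintro es ⟨_, h⟩
    simp only [List.length_eq_zero_iff] at h
    simp [h]
  | succ n ih =>
    intro M
    have hsub : {es : List N.E | N.IsPathFrom M es ∧ es.length = n + 1} ⊆
        ⋃ e ∈ {e : N.E | N.src e = M},
          (e :: ·) '' {es | N.IsPathFrom (N.tgt e) es ∧ es.length = n} := by
      rintro (_ | ⟨e, es⟩) ⟨hp, hl⟩
      · simp at hl
      · obtain ⟨h1, h2⟩ := hp
        simp only [List.length_cons, Nat.succ.injEq] at hl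
        exact Set.mem_biUnion h1 ⟨es, ⟨h2, hl⟩, rfl⟩
    exact Set.Finite.subset
      (Set.Finite.biUnion (N.out_finite M) fun e _ => (ih (N.tgt e)).image _) hsub

def selSet (M : N.S) (σ : List Act) (ς ϱ : List ℝ) : Set (List N.E) :=
  {es : List N.E | N.IsPathFrom M es ∧ es.map N.label = σ ∧
      (N.visits M es).map N.SJ = ς ∧ (N.visits M es).map N.RP = ϱ}

lemma selSet_finite (M : N.S) (σ : List Act) (ς ϱ : List ℝ) :
    (selSet N M σ ς ϱ).Finite := by
  apply Set.Finite.subset (pathSet_finite N σ.length M)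
  rintro es ⟨h1, h2, -⟩
  exact ⟨h1, by simpa using congrArg List.length h2⟩

lemma PTsel_eq (M : N.S) (σ : List Act) (ς ϱ : List ℝ) :
    N.PTsel M σ ς ϱ = ∑ᶠ es ∈ selSet N M σ ς ϱ, N.pathPT es := rfl

end Aux

theorem RLFTS.exists_formula_of_trace' {Act : Type} (N : RLFTS Act) (σ : List Act) :
    ∃ Φ : HMLflt Act, ∀ (M : N.S) (ς ϱ : List ℝ),
      interpFlt N Φ M ς ϱ = N.PTsel M σ ς ϱ := by
  induction σ with
  | nil =>
    refine ⟨.top, fun M ς ϱ => ?_⟩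
    rw [PTsel_eq]
    show (if ς = [N.SJ M] ∧ ϱ = [N.RP M] then (1:ℝ) else 0) = _
    by_cases h : ς = [N.SJ M] ∧ ϱ = [N.RP M]
    · have hset : selSet N M [] ς ϱ = {[]} := by
        ext es
        constructor
        · rintro ⟨-, h2, -⟩
          simpa using List.map_eq_nil_iff.mp h2
        · rintro rfl
          exact ⟨trivial, rfl, by simp [RLFTS.visits, h.1], by simp [RLFTS.visits, h.2]⟩
      rw [hset, finsum_mem_singleton, if_pos h]
      simp [RLFTS.pathPT]
    · have hset : selSet N M [] ς ϱ = ∅ := by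
        ext es
        simp only [Set.mem_empty_iff_false, iff_false]
        rintro ⟨-, h2, h3, h4⟩
        have : es = [] := by simpa using List.map_eq_nil_iff.mp h2
        subst this
        exact h ⟨h3.symm ▸ rfl, h4.symm ▸ rfl⟩
      rw [hset, finsum_mem_empty, if_neg h]
  | cons a σ ih =>
    obtain ⟨Φ, hΦ⟩ := ih
    refine ⟨.dia a Φ, fun M ς ϱ => ?_⟩
    match ς, ϱ with
    | [], ϱ =>
      rw [PTsel_eq]
      have hset : selSet N M (a :: σ) [] ϱ = ∅ := by
        ext es
        simp only [Set.mem_empty_iff_false, iff_false]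
        rintro ⟨-, -, h3, -⟩
        cases es <;> simp [RLFTS.visits] at h3
      rw [hset, finsum_mem_empty]
      rfl
    | s :: ς, [] =>
      rw [PTsel_eq]
      have hset : selSet N M (a :: σ) (s :: ς) [] = ∅ := by
        ext es
        simp only [Set.mem_empty_iff_false, iff_false]
        rintro ⟨-, -, -, h4⟩
        cases es <;> simp [RLFTS.visits] at h4
      rw [hset, finsum_mem_empty]
      rfl
    | s :: ς, r :: ϱ =>
      show (if N.SJ M = s ∧ N.RP M = r then _ else 0) = _
      by_cases h : N.SJ M = s ∧ N.RP M = r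
      · rw [if_pos h, PTsel_eq]
        have hset : selSet N M (a :: σ) (s :: ς) (r :: ϱ) =
            ⋃ e ∈ {e : N.E | N.src e = M ∧ N.label e = a},
              (e :: ·) '' selSet N (N.tgt e) σ ς ϱ := by
          ext es
          constructor
          · rintro ⟨h1, h2, h3, h4⟩
            match es with
            | [] => simp at h2
            | e :: es =>
              obtain ⟨he, hp⟩ := h1
              simp only [List.map_cons, List.cons.injEq] at h2
              simp only [RLFTS.visits, List.map_cons, List.cons.injEq] at h3 h4
              exact Set.mem_biUnion ⟨he, h2.1⟩ ⟨es, ⟨hp, h2.2, h3.2, h4.2⟩, rfl⟩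
          · intro hmem
            simp only [Set.mem_iUnion, Set.mem_image] at hmem
            obtain ⟨e, ⟨he1, he2⟩, es', ⟨h1, h2, h3, h4⟩, rfl⟩ := hmem
            refine ⟨⟨he1, h1⟩, by simp [he2, h2], ?_, ?_⟩
            · simp only [RLFTS.visits, List.map_cons, List.cons.injEq]
              exact ⟨he1 ▸ h.1, h3⟩
            · simp only [RLFTS.visits, List.map_cons, List.cons.injEq]
              exact ⟨he1 ▸ h.2, h4⟩
        rw [hset, finsum_mem_biUnion]
        · apply finsum_mem_congr rfl
          intro e he
          rw [finsum_mem_image (fun x _ y _ hxy => by injection hxy),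
            hΦ (N.tgt e) ς ϱ, PTsel_eq,
            finsum_mem_eq_finite_toFinset_sum _ (selSet_finite N (N.tgt e) σ ς ϱ),
            finsum_mem_eq_finite_toFinset_sum _ (selSet_finite N (N.tgt e) σ ς ϱ),
            Finset.mul_sum]
          apply Finset.sum_congr rfl
          intro es _
          simp [RLFTS.pathPT]
        · intro e he e' he' hne
          simp only [Function.onFun, Set.disjoint_left]
          rintro _ ⟨es, -, rfl⟩ ⟨es', -, heq⟩
          exact hne (by injection heq with h1 _; exact h1.symm)
        · exact (N.out_finite M).subset fun e he => he.1
        · exact fun e _ => (selSet_finite N _ _ _ _).image _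
      · rw [if_neg h, PTsel_eq]
        have hset : selSet N M (a :: σ) (s :: ς) (r :: ϱ) = ∅ := by
          ext es
          simp only [Set.mem_empty_iff_false, iff_false]
          rintro ⟨h1, h2, h3, h4⟩
          match es with
          | [] => simp at h2
          | e :: es =>
            obtain ⟨he, -⟩ := h1
            simp only [RLFTS.visits, List.map_cons, List.cons.injEq] at h3 h4
            exact h ⟨h3.1, h4.1⟩
        rw [hset, finsum_mem_empty]


theorem RLFTS.exists_formula_of_trace {Act : Type} (N : RLFTS Act) (σ : List Act) :
    ∃ Φ : HMLflt Act, ∀ (M : N.S) (ς ϱ : List ℝ), (∀ x ∈ ς, 0 < x) →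
      interpFlt N Φ M ς ϱ = N.PTsel M σ ς ϱ := by
  obtain ⟨Φ, hΦ⟩ := N.exists_formula_of_trace' σ
  exact ⟨Φ, fun M ς ϱ _ => hΦ M ς ϱ⟩
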